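/- arXiv:2202.01288 — 2 statements merged into one kernel-verified Lean document; each statement's English description precedes it below -/
import Mathlib

section
/- Proposition 3.3 (BC loss strictly exceeds the joint loss unless all demonstrators are identical): assume w(i,s) = μ(s)/m with μ(s) > 0 for all s and ∑_s μ(s) = 1 (every demonstrator visits every state with positive probability). If the demonstrators do not all have identical policies, i.e., there exist i, j ∈ {1,…,m} and s ∈ S with noise(π*(·|s), ρ*(i,s)) ≠ noise(π*(·|s), ρ*(j,s)), then the infimum over candidate policies q with strictly positive entries of L_BC(q) is strictly greater than the infimum over candidate pairs (q, r), with r : {1,…,m} × S → (0,1), of NLL(q, r). -/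
/-- A distribution on a finite action set `A`: nonnegative and summing to 1. -/
def IsDist {A : Type*} [Fintype A] (p : A → ℝ) : Prop :=
  (∀ a, 0 ≤ p a) ∧ ∑ a, p a = 1

/-- The noised distribution: `noise p ρ (a) = ρ·p(a) + (1−ρ)/n` where `n = |A|`. -/
noncomputable def noise {A : Type*} [Fintype A] (p : A → ℝ) (ρ : ℝ) : A → ℝ :=
  fun a => ρ * p a + (1 - ρ) / (Fintype.card A : ℝ)

/-- The negative log-likelihood of a candidate policy `q` and candidate expertise levels `r`. -/
noncomputable def NLL {S A : Type*} [Fintype S] [Fintype A] {m : ℕ}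
    (πstar : S → A → ℝ) (ρstar : Fin m → S → ℝ) (w : Fin m → S → ℝ)
    (q : S → A → ℝ) (r : Fin m → S → ℝ) : ℝ :=
  -∑ i, ∑ s, w i s *
    ∑ a, noise (πstar s) (ρstar i s) a * Real.log (noise (q s) (r i s) a)

/-- The behavioral-cloning loss of a candidate policy `q` (with positive entries). -/
noncomputable def LBC {S A : Type*} [Fintype S] [Fintype A] {m : ℕ}
    (πstar : S → A → ℝ) (ρstar : Fin m → S → ℝ) (w : Fin m → S → ℝ)
    (q : S → A → ℝ) : ℝ :=
  -∑ i, ∑ s, w i s *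
    ∑ a, noise (πstar s) (ρstar i s) a * Real.log (q s a)

/-
The joint model can reproduce every demonstrator exactly, so its infimum is the weighted
entropy `NLL(π*, ρ*)`, by Gibbs' inequality. Behavioral cloning instead fits one policy to the
pooled data: with weights `μ(s)/m` its loss only sees the average `Q(s)` of the demonstrators'
noised policies, so it is minimized at `q = Q`. Since two demonstrators differ at some state,
some demonstrator differs from `Q` there, and the strict Gibbs inequality gives
`NLL(π*, ρ*) < L_BC(Q)`.
-/

open Real Finset

theorem mul_log_sub_mul_log_lt {x y : ℝ} (hx : 0 ≤ x) (hy : 0 < y) (hne : x ≠ y) :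
    x * log y - x * log x < y - x := by
  rcases hx.eq_or_lt with rfl | hx
  · simpa using hy
  have hlog : log y - log x < y / x - 1 := by
    rw [← log_div hy.ne' hx.ne']
    refine log_lt_sub_one_of_pos (div_pos hy hx) ?_
    rwa [ne_eq, div_eq_one_iff_eq hx.ne', eq_comm]
  calc x * log y - x * log x = x * (log y - log x) := by ring
    _ < x * (y / x - 1) := mul_lt_mul_of_pos_left hlog hx
    _ = y - x := by field_simp

theorem mul_log_sub_mul_log_le {x y : ℝ} (hx : 0 ≤ x) (hy : 0 < y) :
    x * log y - x * log x ≤ y - x := by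
  rcases eq_or_ne x y with rfl | hne
  · simp
  · exact (mul_log_sub_mul_log_lt hx hy hne).le

section Gibbs

variable {ι : Type*} {s : Finset ι} {p q : ι → ℝ}

theorem sum_mul_log_le_sum_mul_log (hp : ∀ i ∈ s, 0 ≤ p i) (hq : ∀ i ∈ s, 0 < q i)
    (hsum : ∑ i ∈ s, q i ≤ ∑ i ∈ s, p i) :
    ∑ i ∈ s, p i * log (q i) ≤ ∑ i ∈ s, p i * log (p i) := by
  have h := sum_le_sum fun i hi => mul_log_sub_mul_log_le (hp i hi) (hq i hi)
  rw [sum_sub_distrib, sum_sub_distrib] at h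
  linarith

theorem sum_mul_log_lt_sum_mul_log (hp : ∀ i ∈ s, 0 ≤ p i) (hq : ∀ i ∈ s, 0 < q i)
    (hsum : ∑ i ∈ s, q i ≤ ∑ i ∈ s, p i) (hne : ∃ i ∈ s, p i ≠ q i) :
    ∑ i ∈ s, p i * log (q i) < ∑ i ∈ s, p i * log (p i) := by
  obtain ⟨j, hj, hpq⟩ := hne
  have h := sum_lt_sum (fun i hi => mul_log_sub_mul_log_le (hp i hi) (hq i hi))
    ⟨j, hj, mul_log_sub_mul_log_lt (hp j hj) (hq j hj) hpq⟩
  rw [sum_sub_distrib, sum_sub_distrib] at h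
  linarith

end Gibbs

section Noise

variable {A : Type*} [Fintype A] [Nonempty A] {p : A → ℝ} {ρ : ℝ}

theorem noise_pos (hp : ∀ a, 0 ≤ p a) (hρ : ρ ∈ Set.Ico 0 1) (a : A) : 0 < noise p ρ a := by
  have hn : (0 : ℝ) < Fintype.card A := mod_cast Fintype.card_pos
  have := mul_nonneg hρ.1 (hp a)
  have := div_pos (sub_pos.2 hρ.2) hn
  simp only [noise]
  linarith

theorem sum_noise (hp : ∑ a, p a = 1) (ρ : ℝ) : ∑ a, noise p ρ a = 1 := by
  have hn : (Fintype.card A : ℝ) ≠ 0 := mod_cast Fintype.card_ne_zero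
  simp only [noise, sum_add_distrib, ← mul_sum, hp, sum_const, card_univ, nsmul_eq_mul]
  field_simp
  ring

end Noise

section Losses

variable {S A : Type*} [Fintype A] {m : ℕ}
  {πstar : S → A → ℝ} {ρstar : Fin m → S → ℝ} {w : Fin m → S → ℝ}

noncomputable def pooledPolicy (πstar : S → A → ℝ) (ρstar : Fin m → S → ℝ) : S → A → ℝ :=
  fun s a => (∑ i, noise (πstar s) (ρstar i s) a) / m

theorem pooledPolicy_pos [Nonempty A] (hm : m ≠ 0) (hπ : ∀ s, IsDist (πstar s))
    (hρ : ∀ i s, ρstar i s ∈ Set.Ico 0 1) (s : S) (a : A) :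
    0 < pooledPolicy πstar ρstar s a := by
  have : Nonempty (Fin m) := ⟨⟨0, Nat.pos_of_ne_zero hm⟩⟩
  exact div_pos (sum_pos (fun i _ => noise_pos (hπ s).1 (hρ i s) a) univ_nonempty)
    (by positivity)

theorem sum_pooledPolicy [Nonempty A] (hm : m ≠ 0) (hπ : ∀ s, IsDist (πstar s)) (s : S) :
    ∑ a, pooledPolicy πstar ρstar s a = 1 := by
  simp only [pooledPolicy, ← sum_div]
  rw [sum_comm]
  simp [sum_noise (hπ s).2, hm]

variable [Fintype S]

theorem LBC_eq_of_weights_eq {μ : S → ℝ} (hw : ∀ i s, w i s = μ s / m) (q : S → A → ℝ) :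
    LBC πstar ρstar w q = -∑ s, μ s * ∑ a, pooledPolicy πstar ρstar s a * log (q s a) := by
  simp only [LBC, pooledPolicy, hw, neg_inj]
  rw [sum_comm]
  refine sum_congr rfl fun s _ => ?_
  simp only [mul_sum, sum_div, sum_mul]
  rw [sum_comm]
  exact sum_congr rfl fun a _ => sum_congr rfl fun i _ => by ring

variable [Nonempty A]

theorem LBC_pooledPolicy_le {μ : S → ℝ} (hm : m ≠ 0) (hπ : ∀ s, IsDist (πstar s))
    (hρ : ∀ i s, ρstar i s ∈ Set.Ico 0 1) (hμ : ∀ s, 0 ≤ μ s) (hw : ∀ i s, w i s = μ s / m)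
    {q : S → A → ℝ} (hq : ∀ s, IsDist (q s)) (hqpos : ∀ s a, 0 < q s a) :
    LBC πstar ρstar w (pooledPolicy πstar ρstar) ≤ LBC πstar ρstar w q := by
  rw [LBC_eq_of_weights_eq hw, LBC_eq_of_weights_eq hw, neg_le_neg_iff]
  refine sum_le_sum fun s _ => mul_le_mul_of_nonneg_left ?_ (hμ s)
  exact sum_mul_log_le_sum_mul_log (fun a _ => (pooledPolicy_pos hm hπ hρ s a).le)
    (fun a _ => hqpos s a) (by rw [(hq s).2, sum_pooledPolicy hm hπ s])

theorem NLL_self_le (hw : ∀ i s, 0 ≤ w i s) (hπ : ∀ s, IsDist (πstar s))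
    (hρ : ∀ i s, ρstar i s ∈ Set.Ico 0 1) {q : S → A → ℝ} {r : Fin m → S → ℝ}
    (hq : ∀ s, IsDist (q s)) (hr : ∀ i s, r i s ∈ Set.Ico 0 1) :
    NLL πstar ρstar w πstar ρstar ≤ NLL πstar ρstar w q r := by
  refine neg_le_neg <| sum_le_sum fun i _ => sum_le_sum fun s _ =>
    mul_le_mul_of_nonneg_left ?_ (hw i s)
  exact sum_mul_log_le_sum_mul_log (fun a _ => (noise_pos (hπ s).1 (hρ i s) a).le)
    (fun a _ => noise_pos (hq s).1 (hr i s) a)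
    (by rw [sum_noise (hq s).2, sum_noise (hπ s).2])

theorem NLL_self_lt_LBC (hw : ∀ i s, 0 < w i s) (hπ : ∀ s, IsDist (πstar s))
    (hρ : ∀ i s, ρstar i s ∈ Set.Ico 0 1) {f : S → A → ℝ} (hf : ∀ s, IsDist (f s))
    (hfpos : ∀ s a, 0 < f s a) (hne : ∃ i s, noise (πstar s) (ρstar i s) ≠ f s) :
    NLL πstar ρstar w πstar ρstar < LBC πstar ρstar w f := by
  obtain ⟨i₀, s₀, hne⟩ := hne
  have gibbs : ∀ i s, ∑ a, noise (πstar s) (ρstar i s) a * log (f s a) ≤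
      ∑ a, noise (πstar s) (ρstar i s) a * log (noise (πstar s) (ρstar i s) a) := fun i s =>
    sum_mul_log_le_sum_mul_log (fun a _ => (noise_pos (hπ s).1 (hρ i s) a).le)
      (fun a _ => hfpos s a) (by rw [(hf s).2, sum_noise (hπ s).2])
  have gibbs_strict := sum_mul_log_lt_sum_mul_log (s := univ)
    (fun a _ => (noise_pos (hπ s₀).1 (hρ i₀ s₀) a).le) (fun a _ => hfpos s₀ a)
    (by rw [(hf s₀).2, sum_noise (hπ s₀).2])
    (by simpa [funext_iff] using hne)
  refine neg_lt_neg <| sum_lt_sum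
    (fun i _ => sum_le_sum fun s _ => mul_le_mul_of_nonneg_left (gibbs i s) (hw i s).le)
    ⟨i₀, mem_univ _, sum_lt_sum
      (fun s _ => mul_le_mul_of_nonneg_left (gibbs i₀ s) (hw i₀ s).le)
      ⟨s₀, mem_univ _, mul_lt_mul_of_pos_left gibbs_strict (hw i₀ s₀)⟩⟩

end Losses

theorem bc_loss_gt_joint_loss_general {S A : Type*} [Fintype S] [Fintype A] [Nonempty A]
    {m : ℕ}
    (πstar : S → A → ℝ) (hπ : ∀ s, IsDist (πstar s))
    (ρstar : Fin m → S → ℝ) (hρ : ∀ i s, ρstar i s ∈ Set.Ioo (0 : ℝ) 1)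
    (w : Fin m → S → ℝ)
    (μ : S → ℝ) (hμpos : ∀ s, 0 < μ s)
    (hw : ∀ i s, w i s = μ s / m)
    (hdiff : ∃ (i j : Fin m) (s : S),
      noise (πstar s) (ρstar i s) ≠ noise (πstar s) (ρstar j s)) :
    (⨅ q : {q : S → A → ℝ // (∀ s, IsDist (q s)) ∧ ∀ s a, 0 < q s a},
      LBC πstar ρstar w q.1) >
    (⨅ qr : {qr : (S → A → ℝ) × (Fin m → S → ℝ) //
        (∀ s, IsDist (qr.1 s)) ∧ ∀ i s, qr.2 i s ∈ Set.Ioo (0 : ℝ) 1},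
      NLL πstar ρstar w qr.1.1 qr.1.2) := by
  obtain ⟨i, j, s, hij⟩ := hdiff
  have hm : m ≠ 0 := i.pos.ne'
  have hρ' i s : ρstar i s ∈ Set.Ico 0 1 := Set.Ioo_subset_Ico_self (hρ i s)
  have hwpos i s : 0 < w i s := hw i s ▸ div_pos (hμpos s) (by positivity)
  set Q := pooledPolicy πstar ρstar
  have hQ s : IsDist (Q s) :=
    ⟨fun a => (pooledPolicy_pos hm hπ hρ' s a).le, sum_pooledPolicy hm hπ s⟩
  obtain ⟨k, hk⟩ : ∃ k, noise (πstar s) (ρstar k s) ≠ Q s := by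
    by_contra! h
    exact hij ((h i).trans (h j).symm)
  have : Nonempty {q : S → A → ℝ // (∀ s, IsDist (q s)) ∧ ∀ s a, 0 < q s a} :=
    ⟨⟨Q, hQ, pooledPolicy_pos hm hπ hρ'⟩⟩
  have hNLL : BddBelow (Set.range fun qr : {qr : (S → A → ℝ) × (Fin m → S → ℝ) //
        (∀ s, IsDist (qr.1 s)) ∧ ∀ i s, qr.2 i s ∈ Set.Ioo (0 : ℝ) 1} =>
      NLL πstar ρstar w qr.1.1 qr.1.2) :=
    ⟨_, Set.forall_mem_range.2 fun qr => NLL_self_le (fun i s => (hwpos i s).le) hπ hρ'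
      qr.2.1 fun i s => Set.Ioo_subset_Ico_self (qr.2.2 i s)⟩
  calc _ ≤ NLL πstar ρstar w πstar ρstar := ciInf_le hNLL ⟨(πstar, ρstar), hπ, hρ⟩
    _ < LBC πstar ρstar w Q :=
        NLL_self_lt_LBC hwpos hπ hρ' hQ (pooledPolicy_pos hm hπ hρ') ⟨k, s, hk⟩
    _ ≤ _ := le_ciInf fun q =>
        LBC_pooledPolicy_le hm hπ hρ' (fun s => (hμpos s).le) hw q.2.1 q.2.2

/-- Proposition 3.3 (BC loss strictly exceeds the joint loss unless all demonstrators are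
identical): with `w(i,s) = μ(s)/m`, `μ(s) > 0`, `∑_s μ(s) = 1`, if two demonstrators differ
at some state, then the infimum over positive candidate policies `q` of `L_BC(q)` is
strictly greater than the infimum over candidate pairs `(q, r)` of `NLL(q, r)`. -/
theorem bc_loss_gt_joint_loss {S A : Type*} [Fintype S] [Fintype A] [Nonempty S] [Nonempty A]
    {m : ℕ} (hm : 1 ≤ m)
    (πstar : S → A → ℝ) (hπ : ∀ s, IsDist (πstar s))
    (ρstar : Fin m → S → ℝ) (hρ : ∀ i s, ρstar i s ∈ Set.Ioo (0 : ℝ) 1)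
    (w : Fin m → S → ℝ)
    (μ : S → ℝ) (hμpos : ∀ s, 0 < μ s) (hμ1 : ∑ s, μ s = 1)
    (hw : ∀ i s, w i s = μ s / m)
    (hdiff : ∃ (i j : Fin m) (s : S),
      noise (πstar s) (ρstar i s) ≠ noise (πstar s) (ρstar j s)) :
    (⨅ q : {q : S → A → ℝ // (∀ s, IsDist (q s)) ∧ ∀ s a, 0 < q s a},
      LBC πstar ρstar w q.1) >
    (⨅ qr : {qr : (S → A → ℝ) × (Fin m → S → ℝ) //
        (∀ s, IsDist (qr.1 s)) ∧ ∀ i s, qr.2 i s ∈ Set.Ioo (0 : ℝ) 1},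
      NLL πstar ρstar w qr.1.1 qr.1.2) :=
  bc_loss_gt_joint_loss_general πstar hπ ρstar hρ w μ hμpos hw hdiff
end

section
/- Identifiability step of Lemma 3.4: fix d ∈ ℕ, a state embedding f : S → ℝ^d, and true demonstrator embeddings ω*_1,…,ω*_m ∈ ℝ^d, so that the true expertise of demonstrator i at state s is ρ*(i,s) = σ(⟨f(s), ω*_i⟩) ∈ (0,1). Fix s_0 ∈ S, and suppose there exist states s_1,…,s_r ∈ S and reals α_1,…,α_r with f(s_0) = ∑_{k=1}^r α_k · f(s_k), such that π*(·|s) is not the uniform distribution for each s ∈ {s_0, s_1, …, s_r}. Suppose further that no real constants C_0, C_1, …, C_r with C_0 ≠ 1 satisfy both ρ*(i,s_k)/C_k ∈ (0,1) for all i ∈ {1,…,m} and k ∈ {0,…,r}, and logit(ρ*(i,s_0)/C_0) = ∑_{k=1}^r α_k · logit(ρ*(i,s_k)/C_k) for all i ∈ {1,…,m}. Then for every candidate policy q and every collection of embeddings ω'_1,…,ω'_m ∈ ℝ^d: if noise(q(·|s), σ(⟨f(s), ω'_i⟩)) = noise(π*(·|s), σ(⟨f(s), ω*_i⟩)) for all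 i ∈ {1,…,m} and all s ∈ {s_0, s_1, …, s_r}, then q(·|s_0) = π*(·|s_0). -/
/-- The sigmoid function `σ(x) = 1/(1 + exp(−x))`, taking values in `(0,1)`. -/
noncomputable def sigmoid (x : ℝ) : ℝ := 1 / (1 + Real.exp (-x))

/-- The logit function `logit(y) = log(y/(1−y))`, the inverse of the sigmoid on `(0,1)`. -/
noncomputable def logit (y : ℝ) : ℝ := Real.log (y / (1 - y))

lemma sigmoid_eq_real_sigmoid : sigmoid = Real.sigmoid :=
  funext fun _ => one_div _

lemma sigmoid_mem_Ioo (x : ℝ) : sigmoid x ∈ Set.Ioo (0 : ℝ) 1 :=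
  sigmoid_eq_real_sigmoid ▸ ⟨Real.sigmoid_pos x, Real.sigmoid_lt_one x⟩

lemma sigmoid_ne_zero (x : ℝ) : sigmoid x ≠ 0 :=
  (sigmoid_mem_Ioo x).1.ne'

lemma logit_sigmoid (x : ℝ) : logit (sigmoid x) = x := by
  have hσ : sigmoid x / (1 - sigmoid x) = Real.exp x := by
    rw [sigmoid_eq_real_sigmoid, ← Real.sigmoid_neg, ← Real.sigmoid_mul_rexp_neg,
      div_mul_cancel_left₀ (Real.sigmoid_pos x).ne', Real.exp_neg, inv_inv]
  rw [logit, hσ, Real.log_exp]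

lemma sum_mul_eq_sum_mul_sum_mul {ι κ R : Type*} [Fintype ι] [Fintype κ] [CommSemiring R]
    {x : ι → R} {y : κ → ι → R} {α : κ → R} (h : ∀ j, x j = ∑ k, α k * y k j) (w : ι → R) :
    ∑ j, x j * w j = ∑ k, α k * ∑ j, y k j * w j := by
  simp_rw [h, Finset.sum_mul, Finset.mul_sum, mul_assoc]
  exact Finset.sum_comm

section Noise

variable {A : Type*} [Fintype A]

lemma noise_apply_sub_uniform (p : A → ℝ) (ρ : ℝ) (a : A) :
    noise p ρ a - 1 / (Fintype.card A : ℝ) = ρ * (p a - 1 / (Fintype.card A : ℝ)) := by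
  rw [noise]
  ring

lemma eq_of_noise_eq_noise {p q : A → ℝ} {ρ : ℝ} (hρ : ρ ≠ 0) (h : noise p ρ = noise q ρ) :
    p = q := by
  funext a
  have hdev := noise_apply_sub_uniform q ρ a
  rw [← congrFun h a, noise_apply_sub_uniform] at hdev
  simpa using mul_left_cancel₀ hρ hdev

noncomputable def deviationRatio (q p : A → ℝ) (a : A) : ℝ :=
  (q a - 1 / (Fintype.card A : ℝ)) / (p a - 1 / (Fintype.card A : ℝ))

lemma eq_div_deviationRatio_of_noise_eq {p q : A → ℝ} {ρ ρ' : ℝ} (h : noise q ρ' = noise p ρ)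
    (hρ : ρ ≠ 0) {a : A} (ha : p a ≠ 1 / (Fintype.card A : ℝ)) :
    ρ' = ρ / deviationRatio q p a := by
  have hdev : ρ' * (q a - 1 / (Fintype.card A : ℝ)) = ρ * (p a - 1 / (Fintype.card A : ℝ)) := by
    rw [← noise_apply_sub_uniform, ← noise_apply_sub_uniform, h]
  have hp : p a - 1 / (Fintype.card A : ℝ) ≠ 0 := sub_ne_zero.mpr ha
  have hq : q a - 1 / (Fintype.card A : ℝ) ≠ 0 := by
    rintro hq
    rw [hq, mul_zero] at hdev
    exact mul_ne_zero hρ hp hdev.symm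
  rw [deviationRatio, div_div_eq_mul_div, eq_div_iff hq, hdev]

end Noise

theorem identifiability_step_general {S A : Type*} [Fintype A]
    {m d r : ℕ} (hm : 1 ≤ m)
    (πstar : S → A → ℝ)
    (f : S → Fin d → ℝ) (ωstar : Fin m → Fin d → ℝ)
    (s₀ : S) (t : Fin r → S) (α : Fin r → ℝ)
    (hlin : ∀ j, f s₀ j = ∑ k, α k * f (t k) j)
    (hnu₀ : ∃ a, πstar s₀ a ≠ 1 / (Fintype.card A : ℝ))
    (hnut : ∀ k, ∃ a, πstar (t k) a ≠ 1 / (Fintype.card A : ℝ))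
    (hC : ¬ ∃ (C₀ : ℝ) (C : Fin r → ℝ), C₀ ≠ 1 ∧
      (∀ i, sigmoid (∑ j, f s₀ j * ωstar i j) / C₀ ∈ Set.Ioo (0 : ℝ) 1) ∧
      (∀ i k, sigmoid (∑ j, f (t k) j * ωstar i j) / C k ∈ Set.Ioo (0 : ℝ) 1) ∧
      (∀ i, logit (sigmoid (∑ j, f s₀ j * ωstar i j) / C₀) =
        ∑ k, α k * logit (sigmoid (∑ j, f (t k) j * ωstar i j) / C k))) :
    ∀ (q : S → A → ℝ), (∀ s, IsDist (q s)) →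
    ∀ ω' : Fin m → Fin d → ℝ,
      (∀ i, noise (q s₀) (sigmoid (∑ j, f s₀ j * ω' i j)) =
        noise (πstar s₀) (sigmoid (∑ j, f s₀ j * ωstar i j))) →
      (∀ i k, noise (q (t k)) (sigmoid (∑ j, f (t k) j * ω' i j)) =
        noise (πstar (t k)) (sigmoid (∑ j, f (t k) j * ωstar i j))) →
      q s₀ = πstar s₀ := by
  intro q _ ω' h₀ ht
  obtain ⟨a₀, ha₀⟩ := hnu₀
  choose a ha using hnut
  have hρ₀ : ∀ i, sigmoid (∑ j, f s₀ j * ω' i j) =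
      sigmoid (∑ j, f s₀ j * ωstar i j) / deviationRatio (q s₀) (πstar s₀) a₀ := fun i =>
    eq_div_deviationRatio_of_noise_eq (h₀ i) (sigmoid_ne_zero _) ha₀
  have hρt : ∀ i k, sigmoid (∑ j, f (t k) j * ω' i j) =
      sigmoid (∑ j, f (t k) j * ωstar i j) / deviationRatio (q (t k)) (πstar (t k)) (a k) :=
    fun i k => eq_div_deviationRatio_of_noise_eq (ht i k) (sigmoid_ne_zero _) (ha k)
  have hC₀ : deviationRatio (q s₀) (πstar s₀) a₀ = 1 := by
    by_contra hne
    refine hC ⟨_, fun k => deviationRatio (q (t k)) (πstar (t k)) (a k), hne,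
      fun i => hρ₀ i ▸ sigmoid_mem_Ioo _, fun i k => hρt i k ▸ sigmoid_mem_Ioo _, fun i => ?_⟩
    simp_rw [← hρ₀, ← hρt, logit_sigmoid]
    exact sum_mul_eq_sum_mul_sum_mul hlin (ω' i)
  have hmatch := h₀ ⟨0, hm⟩
  rw [hρ₀, hC₀, div_one] at hmatch
  exact eq_of_noise_eq_noise (sigmoid_ne_zero _) hmatch

/-- Identifiability step of Lemma 3.4: if `f(s_0)` is a linear combination of
`f(s_1),…,f(s_r)`, the true policy is non-uniform at each of `s_0,…,s_r`, and no constants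
`C_0,…,C_r` with `C_0 ≠ 1` satisfy both `ρ*(i,s_k)/C_k ∈ (0,1)` for all `i, k` and
`logit(ρ*(i,s_0)/C_0) = ∑_k α_k·logit(ρ*(i,s_k)/C_k)` for all `i`, then any candidate pair
(policy `q`, embeddings `ω'`) matching the demonstrators' noised distributions on
`{s_0, s_1, …, s_r}` must satisfy `q(·|s_0) = π*(·|s_0)`.
Here `ρ*(i,s) = σ(⟨f(s), ω*_i⟩)`. -/
theorem identifiability_step {S A : Type*} [Fintype S] [Fintype A] [Nonempty S] [Nonempty A]
    {m d r : ℕ} (hm : 1 ≤ m)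
    (πstar : S → A → ℝ) (hπ : ∀ s, IsDist (πstar s))
    (f : S → Fin d → ℝ) (ωstar : Fin m → Fin d → ℝ)
    (s₀ : S) (t : Fin r → S) (α : Fin r → ℝ)
    (hlin : ∀ j, f s₀ j = ∑ k, α k * f (t k) j)
    (hnu₀ : ∃ a, πstar s₀ a ≠ 1 / (Fintype.card A : ℝ))
    (hnut : ∀ k, ∃ a, πstar (t k) a ≠ 1 / (Fintype.card A : ℝ))
    (hC : ¬ ∃ (C₀ : ℝ) (C : Fin r → ℝ), C₀ ≠ 1 ∧
      (∀ i, sigmoid (∑ j, f s₀ j * ωstar i j) / C₀ ∈ Set.Ioo (0 : ℝ) 1) ∧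
      (∀ i k, sigmoid (∑ j, f (t k) j * ωstar i j) / C k ∈ Set.Ioo (0 : ℝ) 1) ∧
      (∀ i, logit (sigmoid (∑ j, f s₀ j * ωstar i j) / C₀) =
        ∑ k, α k * logit (sigmoid (∑ j, f (t k) j * ωstar i j) / C k))) :
    ∀ (q : S → A → ℝ), (∀ s, IsDist (q s)) →
    ∀ ω' : Fin m → Fin d → ℝ,
      (∀ i, noise (q s₀) (sigmoid (∑ j, f s₀ j * ω' i j)) =
        noise (πstar s₀) (sigmoid (∑ j, f s₀ j * ωstar i j))) →
      (∀ i k, noise (q (t k)) (sigmoid (∑ j, f (t k) j * ω' i j)) =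
        noise (πstar (t k)) (sigmoid (∑ j, f (t k) j * ωstar i j))) →
      q s₀ = πstar s₀ :=
  identifiability_step_general hm πstar f ωstar s₀ t α hlin hnu₀ hnut hC
end
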